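/- Let μ = 1/4. (a) If β ∈ (0, 1) then there exists ρ ∈ (0, min{1, ρ₀}) such that x ↦ δ(x)^{1/2}(log(1/δ(x)))^β is a super-harmonic of L_{1/4} on Ω_ρ; if β < 0 or β > 1 it is (for some such ρ) a sub-harmonic of L_{1/4} on Ω_ρ. (b) For every ε ∈ (0, 1) there exists ρ ∈ (0, min{1, ρ₀}) such that on Ω_ρ the functions δ^{1/2}(1 − (log(1/δ))^{−ε}) and δ^{1/2}·log(1/δ)·(1 + (log(1/δ))^{−ε}) are positive super-harmonics of L_{1/4}, while δ^{1/2}(1 + (log(1/δ))^{−ε}) and δ^{1/2}·log(1/δ)·(1 − (log(1/δ))^{−ε}) are positive sub-harmonics of L_{1/4}. -/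

import Mathlib

/-!
If `|∇δ| = 1`, then `L_μ (f ∘ δ) = (-f'' - μ f / t²) ∘ δ - (f' ∘ δ) Δδ`. For
`f t = t^{1/2} (log 1/t)^β` and `μ = 1/4` the radial part equals
`β(1-β) t^{-3/2} (log 1/t)^{β-2}`, whereas `f' = O(t^{-1/2} (log 1/t)^β)` is negligible against
it as `t → 0⁺`, because `t (log 1/t)^k → 0`. Since `Δδ` is bounded, the sign of `L_{1/4} (f ∘ δ)`
near the boundary is that of `β(1-β)`. In (b) the leading terms `t^{1/2}` and `t^{1/2} log(1/t)`
are the cases `β = 0, 1`, which lie in the kernel of the radial part, so the sign is decided by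
the perturbation `± t^{1/2} (log 1/t)^γ` with `γ = -ε` or `γ = 1 - ε`.
-/

open Set Metric MeasureTheory Real

noncomputable section

/-- Distance to the boundary of `Ω`. -/
def bdist {N : ℕ} (Ω : Set (EuclideanSpace ℝ (Fin N))) (x : EuclideanSpace ℝ (Fin N)) : ℝ :=
  Metric.infDist x Ωᶜ

/-- The collar `Ω_ρ = {x ∈ Ω : δ(x) < ρ}`. -/
def collar {N : ℕ} (Ω : Set (EuclideanSpace ℝ (Fin N))) (ρ : ℝ) :
    Set (EuclideanSpace ℝ (Fin N)) :=
  {x ∈ Ω | bdist Ω x < ρ}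

/-- The ring `Ω_{ε,ρ} = {x ∈ Ω : ε < δ(x) < ρ}`. -/
def ring' {N : ℕ} (Ω : Set (EuclideanSpace ℝ (Fin N))) (ε ρ : ℝ) :
    Set (EuclideanSpace ℝ (Fin N)) :=
  {x ∈ Ω | ε < bdist Ω x ∧ bdist Ω x < ρ}

/-- The Laplacian. -/
def lap {N : ℕ} (f : EuclideanSpace ℝ (Fin N) → ℝ) (x : EuclideanSpace ℝ (Fin N)) : ℝ :=
  ∑ i : Fin N, fderiv ℝ (fun y => fderiv ℝ f y (EuclideanSpace.single i 1)) x
    (EuclideanSpace.single i 1)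

/-- `ρ₀` is a good collar width: `δ` is `C²` on `Ω_{ρ₀}`, `|∇δ| = 1` there, `Δδ` bounded. -/
def GoodCollar {N : ℕ} (Ω : Set (EuclideanSpace ℝ (Fin N))) (ρ₀ : ℝ) : Prop :=
  0 < ρ₀ ∧ ContDiffOn ℝ 2 (bdist Ω) (collar Ω ρ₀) ∧
    (∀ x ∈ collar Ω ρ₀, ‖gradient (bdist Ω) x‖ = 1) ∧
    ∃ M, ∀ x ∈ collar Ω ρ₀, |lap (bdist Ω) x| ≤ M

/-- A super-harmonic of `L_μ = -Δ - μ/δ²` on `G`. -/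
def SuperHarm {N : ℕ} (Ω : Set (EuclideanSpace ℝ (Fin N))) (μ : ℝ)
    (G : Set (EuclideanSpace ℝ (Fin N))) (h : EuclideanSpace ℝ (Fin N) → ℝ) : Prop :=
  ContDiffOn ℝ 2 h G ∧ ∀ x ∈ G, 0 ≤ -(lap h x) - μ / (bdist Ω x) ^ 2 * h x

/-- A sub-harmonic of `L_μ = -Δ - μ/δ²` on `G`. -/
def SubHarm {N : ℕ} (Ω : Set (EuclideanSpace ℝ (Fin N))) (μ : ℝ)
    (G : Set (EuclideanSpace ℝ (Fin N))) (h : EuclideanSpace ℝ (Fin N) → ℝ) : Prop :=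
  ContDiffOn ℝ 2 h G ∧ ∀ x ∈ G, -(lap h x) - μ / (bdist Ω x) ^ 2 * h x ≤ 0

/-- A positive local super-harmonic of `L_μ`, defined on the collar `Ω_σ`. -/
def PosSuperHarmOn {N : ℕ} (Ω : Set (EuclideanSpace ℝ (Fin N))) (μ σ : ℝ)
    (h : EuclideanSpace ℝ (Fin N) → ℝ) : Prop :=
  SuperHarm Ω μ (collar Ω σ) h ∧ ∀ x ∈ collar Ω σ, 0 < h x

/-- A sub-solution of `(*)`: `-Δu - (μ/δ²)u + u^p/δ^s = 0` on `G`. -/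
def SubSol {N : ℕ} (Ω : Set (EuclideanSpace ℝ (Fin N))) (μ s p : ℝ)
    (G : Set (EuclideanSpace ℝ (Fin N))) (u : EuclideanSpace ℝ (Fin N) → ℝ) : Prop :=
  ContDiffOn ℝ 2 u G ∧ (∀ x ∈ G, 0 ≤ u x) ∧
    ∀ x ∈ G, -(lap u x) - μ / (bdist Ω x) ^ 2 * u x + (u x) ^ p / (bdist Ω x) ^ s ≤ 0

/-- A super-solution of `(*)` on `G`. -/
def SuperSol {N : ℕ} (Ω : Set (EuclideanSpace ℝ (Fin N))) (μ s p : ℝ)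
    (G : Set (EuclideanSpace ℝ (Fin N))) (u : EuclideanSpace ℝ (Fin N) → ℝ) : Prop :=
  ContDiffOn ℝ 2 u G ∧ (∀ x ∈ G, 0 < u x) ∧
    ∀ x ∈ G, 0 ≤ -(lap u x) - μ / (bdist Ω x) ^ 2 * u x + (u x) ^ p / (bdist Ω x) ^ s

/-- A regularized distance `(d, c)` on `Ω`. -/
def RegDist {N : ℕ} (Ω : Set (EuclideanSpace ℝ (Fin N))) (d : EuclideanSpace ℝ (Fin N) → ℝ)
    (c : ℝ) : Prop :=
  1 ≤ c ∧ ContDiffOn ℝ 2 d Ω ∧ (∀ x ∈ Ω, 0 < d x) ∧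
    (∀ x ∈ Ω, c⁻¹ * bdist Ω x ≤ d x ∧ d x ≤ c * bdist Ω x) ∧
    (∀ x ∈ Ω, ‖gradient d x‖ ≤ c) ∧ (∀ x ∈ Ω, |lap d x| ≤ c / d x)

open Filter Topology Asymptotics

def logProfile (β t : ℝ) : ℝ := t ^ (1 / 2 : ℝ) * log (1 / t) ^ β

def logProfileDeriv (β t : ℝ) : ℝ :=
  t ^ (-1 / 2 : ℝ) * (1 / 2 * log (1 / t) ^ β - β * log (1 / t) ^ (β - 1))

def logProfileDeriv2 (β t : ℝ) : ℝ :=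
  t ^ (-3 / 2 : ℝ) * (-(1 / 4) * log (1 / t) ^ β + β * (β - 1) * log (1 / t) ^ (β - 2))

def logWeight (γ t : ℝ) : ℝ := t ^ (-3 / 2 : ℝ) * log (1 / t) ^ γ

/-- The radial part of `L_μ`, with `f''` standing for the second derivative of `f`. -/
def radialOp (μ : ℝ) (f f'' : ℝ → ℝ) (t : ℝ) : ℝ := -f'' t - μ / t ^ 2 * f t

lemma log_one_div_pos {t : ℝ} (ht : t ∈ Ioo (0 : ℝ) 1) : 0 < log (1 / t) := by
  rw [one_div, log_inv, neg_pos]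
  exact log_neg ht.1 ht.2

lemma hasDerivAt_log_one_div {t : ℝ} (ht : t ≠ 0) :
    HasDerivAt (fun s => log (1 / s)) (-t⁻¹) t := by
  simpa only [one_div, log_inv] using (hasDerivAt_log ht).fun_neg

lemma hasDerivAt_logProfile (β : ℝ) {t : ℝ} (ht : t ∈ Ioo (0 : ℝ) 1) :
    HasDerivAt (logProfile β) (logProfileDeriv β t) t := by
  have ht0 : t ≠ 0 := ht.1.ne'
  have hL := log_one_div_pos ht
  refine ((hasDerivAt_rpow_const (p := 1 / 2) (Or.inl ht0)).fun_mul
    ((hasDerivAt_log_one_div ht0).rpow_const (p := β) (Or.inl hL.ne'))).congr_deriv ?_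
  have h : t ^ (1 / 2 : ℝ) = t ^ (-1 / 2 : ℝ) * t := by
    rw [← rpow_add_one ht0]; norm_num
  rw [logProfileDeriv, h, show (1 / 2 : ℝ) - 1 = -1 / 2 by norm_num]
  field_simp
  ring

lemma hasDerivAt_logProfileDeriv (β : ℝ) {t : ℝ} (ht : t ∈ Ioo (0 : ℝ) 1) :
    HasDerivAt (logProfileDeriv β) (logProfileDeriv2 β t) t := by
  have ht0 : t ≠ 0 := ht.1.ne'
  have hL := log_one_div_pos ht
  have hlog := hasDerivAt_log_one_div ht0
  refine ((hasDerivAt_rpow_const (p := -1 / 2) (Or.inl ht0)).fun_mul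
    (((hlog.rpow_const (p := β) (Or.inl hL.ne')).const_mul (1 / 2)).fun_sub
      ((hlog.rpow_const (p := β - 1) (Or.inl hL.ne')).const_mul β))).congr_deriv ?_
  have h : t ^ (-1 / 2 : ℝ) = t ^ (-3 / 2 : ℝ) * t := by
    rw [← rpow_add_one ht0]; norm_num
  rw [logProfileDeriv2, h, show (-1 / 2 : ℝ) - 1 = -3 / 2 by norm_num,
    show β - 1 - 1 = β - 2 by ring]
  field_simp
  ring

lemma contDiffOn_logProfile (β : ℝ) : ContDiffOn ℝ 2 (logProfile β) (Ioo 0 1) := by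
  intro t ht
  have ht0 : t ≠ 0 := ht.1.ne'
  have h₁ : 1 / t ≠ 0 := one_div_ne_zero ht0
  have hL : log (1 / t) ≠ 0 := (log_one_div_pos ht).ne'
  refine ContDiffAt.contDiffWithinAt ?_
  unfold logProfile
  fun_prop (disch := assumption)

lemma radialOp_logProfile (β : ℝ) {t : ℝ} (ht : 0 < t) :
    radialOp (1 / 4) (logProfile β) (logProfileDeriv2 β) t =
      β * (1 - β) * logWeight (β - 2) t := by
  have h : t ^ (1 / 2 : ℝ) = t ^ (-3 / 2 : ℝ) * t ^ 2 := by
    rw [← rpow_natCast, ← rpow_add ht]; norm_num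
  rw [radialOp, logProfile, logProfileDeriv2, logWeight, h]
  field_simp
  ring

lemma logWeight_nonneg (γ : ℝ) {t : ℝ} (ht : t ∈ Ioo (0 : ℝ) 1) : 0 ≤ logWeight γ t :=
  mul_nonneg (rpow_nonneg ht.1.le _) (rpow_nonneg (log_one_div_pos ht).le _)

lemma isLittleO_rpow_mul_log_rpow_logWeight (a γ : ℝ) :
    (fun t => t ^ (-1 / 2 : ℝ) * log (1 / t) ^ a) =o[𝓝[>] 0] logWeight γ := by
  have h := (isLittleO_abs_log_rpow_rpow_nhdsGT_zero (a - γ) neg_one_lt_zero).mul_isBigO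
    (isBigO_refl (fun t => t ^ (-1 / 2 : ℝ) * log (1 / t) ^ γ) (𝓝[>] 0))
  refine h.congr' ?_ ?_ <;> filter_upwards [Ioo_mem_nhdsGT one_pos] with t ht
  · have hL := log_one_div_pos ht
    have habs : |log t| = log (1 / t) := by
      rw [one_div, log_inv, abs_of_neg (log_neg ht.1 ht.2)]
    rw [habs, rpow_sub hL]
    field_simp
  · rw [logWeight, show (-3 / 2 : ℝ) = -1 + -1 / 2 by norm_num, rpow_add ht.1]
    ring

lemma isLittleO_logProfileDeriv (β γ : ℝ) : logProfileDeriv β =o[𝓝[>] 0] logWeight γ := by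
  refine (((isLittleO_rpow_mul_log_rpow_logWeight β γ).const_mul_left (1 / 2)).sub
    ((isLittleO_rpow_mul_log_rpow_logWeight (β - 1) γ).const_mul_left β)).congr_left fun t => ?_
  simp only [logProfileDeriv]
  ring

lemma eventually_mul_abs_le_of_isLittleO {l : Filter ℝ} {u v w : ℝ → ℝ} {c : ℝ}
    (huw : u =o[l] w) (hc : 0 < c) (hw : ∀ᶠ t in l, 0 ≤ w t) (hv : ∀ᶠ t in l, c * w t ≤ v t)
    (M : ℝ) : ∀ᶠ t in l, M * |u t| ≤ v t := by
  have hM : 0 < |M| + 1 := by positivity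
  filter_upwards [huw.bound (div_pos hc hM), hw, hv] with t hu hw hv
  rw [norm_eq_abs, norm_eq_abs, abs_of_nonneg hw] at hu
  calc M * |u t| ≤ (|M| + 1) * |u t| := by gcongr; linarith [le_abs_self M]
    _ ≤ (|M| + 1) * (c / (|M| + 1) * w t) := by gcongr
    _ = c * w t := by field_simp
    _ ≤ v t := hv

lemma eventually_one_lt_log_one_div : ∀ᶠ t in 𝓝[>] (0 : ℝ), 1 < log (1 / t) := by
  simpa only [one_div, Function.comp_apply] using
    (tendsto_log_atTop.comp tendsto_inv_nhdsGT_zero).eventually_gt_atTop (1 : ℝ)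

lemma eventually_forall_Ioo {P : ℝ → Prop} (h : ∀ᶠ t in 𝓝[>] (0 : ℝ), P t) :
    ∀ᶠ ρ in 𝓝[>] (0 : ℝ), ∀ t ∈ Ioo 0 ρ, P t := by
  obtain ⟨ε, hε, hsub⟩ := mem_nhdsGT_iff_exists_Ioo_subset.1 h
  filter_upwards [Ioo_mem_nhdsGT hε] with ρ hρ t ht using hsub ⟨ht.1, ht.2.trans hρ.2⟩

lemma exists_lt_of_eventually {P : ℝ → Prop} (h : ∀ᶠ ρ in 𝓝[>] (0 : ℝ), P ρ) {a : ℝ}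
    (ha : 0 < a) : ∃ ρ, 0 < ρ ∧ ρ < a ∧ P ρ := by
  obtain ⟨ρ, hρ, hP⟩ := (h.and (Ioo_mem_nhdsGT ha)).exists
  exact ⟨ρ, hP.1, hP.2, hρ⟩

section Laplacian

variable {N : ℕ}

local notation "E" => EuclideanSpace ℝ (Fin N)

lemma sum_fderiv_single_sq (d : E → ℝ) (x : E) :
    ∑ i, fderiv ℝ d x (EuclideanSpace.single i 1) ^ 2 = ‖gradient d x‖ ^ 2 := by
  have h : ∀ v, fderiv ℝ d x v = inner ℝ (gradient d x) v := fun _ =>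
    InnerProductSpace.toDual_symm_apply.symm
  rw [EuclideanSpace.real_norm_sq_eq]
  refine Finset.sum_congr rfl fun i _ => ?_
  rw [h, EuclideanSpace.inner_single_right]
  simp

lemma lap_neg (h : E → ℝ) (x : E) : lap (fun y => -h y) x = -lap h x := by
  simp [lap, fderiv_fun_neg]

lemma lap_comp {d : E → ℝ} {G : Set E} (hG : IsOpen G) (hd : ContDiffOn ℝ 2 d G)
    {f f' f'' : ℝ → ℝ} {I : Set ℝ} (hmap : MapsTo d G I)
    (hf' : ∀ t ∈ I, HasDerivAt f (f' t) t) (hf'' : ∀ t ∈ I, HasDerivAt f' (f'' t) t)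
    {x : E} (hx : x ∈ G) :
    lap (fun y => f (d y)) x = f'' (d x) * ‖gradient d x‖ ^ 2 + f' (d x) * lap d x := by
  have hd1 : ∀ y ∈ G, HasFDerivAt d (fderiv ℝ d y) y := fun y hy =>
    ((hd.differentiableOn two_ne_zero).differentiableAt (hG.mem_nhds hy)).hasFDerivAt
  have hDd : DifferentiableAt ℝ (fderiv ℝ d) x :=
    ((hd.fderiv_of_isOpen hG le_rfl).differentiableOn one_ne_zero).differentiableAt
      (hG.mem_nhds hx)
  have hf'd : HasFDerivAt (fun y => f' (d y)) (f'' (d x) • fderiv ℝ d x) x :=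
    (hf'' _ (hmap hx)).comp_hasFDerivAt x (hd1 x hx)
  rw [← sum_fderiv_single_sq, lap, lap, Finset.mul_sum, Finset.mul_sum,
    ← Finset.sum_add_distrib]
  refine Finset.sum_congr rfl fun i _ => ?_
  set v : E := EuclideanSpace.single i 1
  have hchain : (fun y => fderiv ℝ (fun z => f (d z)) y v) =ᶠ[𝓝 x]
      fun y => f' (d y) * fderiv ℝ d y v := by
    filter_upwards [hG.mem_nhds hx] with y hy
    exact congrArg (· v) ((hf' _ (hmap hy)).comp_hasFDerivAt y (hd1 y hy)).fderiv
  rw [hchain.fderiv_eq,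
    fderiv_fun_mul hf'd.differentiableAt (hDd.clm_apply (differentiableAt_const v)),
    hf'd.fderiv]
  simp only [add_apply, smul_apply, smul_eq_mul,
    fderiv_clm_apply hDd (differentiableAt_const v)]
  ring

end Laplacian

section Collar

variable {N : ℕ} {Ω : Set (EuclideanSpace ℝ (Fin N))}

lemma compl_nonempty_of_isBounded (hN : 0 < N) (hΩb : Bornology.IsBounded Ω) :
    Ωᶜ.Nonempty := by
  have : Nonempty (Fin N) := ⟨⟨0, hN⟩⟩
  rw [nonempty_compl]
  rintro rfl
  exact NormedSpace.unbounded_univ ℝ _ hΩb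

lemma isOpen_collar (hΩo : IsOpen Ω) (ρ : ℝ) : IsOpen (collar Ω ρ) :=
  hΩo.inter (isOpen_lt (continuous_infDist_pt _) continuous_const)

lemma collar_mono {ρ ρ' : ℝ} (h : ρ ≤ ρ') : collar Ω ρ ⊆ collar Ω ρ' :=
  fun _ hx => ⟨hx.1, hx.2.trans_le h⟩

lemma bdist_mem_Ioo (hΩo : IsOpen Ω) (hΩc : Ωᶜ.Nonempty) {ρ : ℝ}
    {x : EuclideanSpace ℝ (Fin N)} (hx : x ∈ collar Ω ρ) : bdist Ω x ∈ Ioo 0 ρ :=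
  ⟨(hΩo.isClosed_compl.notMem_iff_infDist_pos hΩc).1 (not_not_intro hx.1), hx.2⟩

lemma eventually_forall_collar (hΩo : IsOpen Ω) (hΩc : Ωᶜ.Nonempty) {P : ℝ → Prop}
    (h : ∀ᶠ t in 𝓝[>] (0 : ℝ), P t) :
    ∀ᶠ ρ in 𝓝[>] (0 : ℝ), ∀ x ∈ collar Ω ρ, P (bdist Ω x) := by
  filter_upwards [eventually_forall_Ioo h] with ρ hρ x hx using hρ _ (bdist_mem_Ioo hΩo hΩc hx)

lemma SubHarm.of_superHarm_neg {μ : ℝ} {G : Set (EuclideanSpace ℝ (Fin N))}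
    {h : EuclideanSpace ℝ (Fin N) → ℝ} (H : SuperHarm Ω μ G fun x => -h x) :
    SubHarm Ω μ G h := by
  refine ⟨by simpa using H.1.neg, fun x hx => ?_⟩
  have := H.2 x hx
  rw [lap_neg] at this
  linarith

variable {ρ₀ μ : ℝ} {f f' f'' : ℝ → ℝ}

lemma neg_lap_comp_bdist_sub_eq (hΩo : IsOpen Ω) (hΩc : Ωᶜ.Nonempty) (hρ₀ : GoodCollar Ω ρ₀)
    (hf' : ∀ t ∈ Ioo 0 1, HasDerivAt f (f' t) t)
    (hf'' : ∀ t ∈ Ioo 0 1, HasDerivAt f' (f'' t) t)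
    {x : EuclideanSpace ℝ (Fin N)} (hx : x ∈ collar Ω (min 1 ρ₀)) :
    -lap (fun y => f (bdist Ω y)) x - μ / bdist Ω x ^ 2 * f (bdist Ω x) =
      radialOp μ f f'' (bdist Ω x) - f' (bdist Ω x) * lap (bdist Ω) x := by
  have hsub : collar Ω (min 1 ρ₀) ⊆ collar Ω ρ₀ := collar_mono (min_le_right _ _)
  have hmap : MapsTo (bdist Ω) (collar Ω (min 1 ρ₀)) (Ioo 0 1) := fun y hy =>
    Ioo_subset_Ioo_right (min_le_left _ _) (bdist_mem_Ioo hΩo hΩc hy)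
  rw [lap_comp (isOpen_collar hΩo _) (hρ₀.2.1.mono hsub) hmap hf' hf'' hx,
    hρ₀.2.2.1 x (hsub hx), radialOp]
  ring

theorem eventually_superHarm_comp_bdist (hΩo : IsOpen Ω) (hΩc : Ωᶜ.Nonempty)
    (hρ₀ : GoodCollar Ω ρ₀) (hf : ContDiffOn ℝ 2 f (Ioo 0 1))
    (hf' : ∀ t ∈ Ioo 0 1, HasDerivAt f (f' t) t)
    (hf'' : ∀ t ∈ Ioo 0 1, HasDerivAt f' (f'' t) t)
    (hdom : ∀ M, ∀ᶠ t in 𝓝[>] 0, M * |f' t| ≤ radialOp μ f f'' t) :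
    ∀ᶠ ρ in 𝓝[>] 0, SuperHarm Ω μ (collar Ω ρ) fun x => f (bdist Ω x) := by
  obtain ⟨M, hM⟩ := hρ₀.2.2.2
  filter_upwards [eventually_forall_Ioo (hdom M), Ioc_mem_nhdsGT (lt_min one_pos hρ₀.1)]
    with ρ hest hρ
  have hsub : collar Ω ρ ⊆ collar Ω (min 1 ρ₀) := collar_mono hρ.2
  have hsub₀ : collar Ω ρ ⊆ collar Ω ρ₀ := hsub.trans (collar_mono (min_le_right _ _))
  have hmap : MapsTo (bdist Ω) (collar Ω ρ) (Ioo 0 1) := fun y hy =>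
    Ioo_subset_Ioo_right (hρ.2.trans (min_le_left _ _)) (bdist_mem_Ioo hΩo hΩc hy)
  refine ⟨hf.comp (hρ₀.2.1.mono hsub₀) hmap, fun x hx => ?_⟩
  rw [neg_lap_comp_bdist_sub_eq hΩo hΩc hρ₀ hf' hf'' (hsub hx)]
  have hlap : f' (bdist Ω x) * lap (bdist Ω) x ≤ M * |f' (bdist Ω x)| := by
    refine (le_abs_self _).trans ?_
    rw [abs_mul, mul_comm]
    exact mul_le_mul_of_nonneg_right (hM x (hsub₀ hx)) (abs_nonneg _)
  linarith [hest _ (bdist_mem_Ioo hΩo hΩc hx)]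

variable {f : ℝ → ℝ} {a b c γ : ℝ}

/- `logProfile 0` and `logProfile 1` span the kernel of `radialOp (1 / 4)`, so the radial part
of `f` is `c γ (1 - γ) logWeight (γ - 2)`. -/
theorem eventually_superHarm_logProfile_add (hΩo : IsOpen Ω) (hΩc : Ωᶜ.Nonempty)
    (hρ₀ : GoodCollar Ω ρ₀) (hc : 0 < c * (γ * (1 - γ)))
    (hf : EqOn f (fun t => a * logProfile 0 t + b * logProfile 1 t + c * logProfile γ t)
      (Ioo 0 1)) :
    ∀ᶠ ρ in 𝓝[>] 0, SuperHarm Ω (1 / 4) (collar Ω ρ) fun x => f (bdist Ω x) := by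
  refine eventually_superHarm_comp_bdist hΩo hΩc hρ₀
    (f' := fun t => a * logProfileDeriv 0 t + b * logProfileDeriv 1 t + c * logProfileDeriv γ t)
    (f'' := fun t => a * logProfileDeriv2 0 t + b * logProfileDeriv2 1 t +
      c * logProfileDeriv2 γ t)
    (((contDiffOn_const.mul (contDiffOn_logProfile 0)).add
      (contDiffOn_const.mul (contDiffOn_logProfile 1))).add
        (contDiffOn_const.mul (contDiffOn_logProfile γ)) |>.congr hf)
    (fun t ht => ((((hasDerivAt_logProfile 0 ht).const_mul a).add
      ((hasDerivAt_logProfile 1 ht).const_mul b)).add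
        ((hasDerivAt_logProfile γ ht).const_mul c)).congr_of_eventuallyEq
          (eventuallyEq_of_mem (Ioo_mem_nhds ht.1 ht.2) hf))
    (fun t ht => (((hasDerivAt_logProfileDeriv 0 ht).const_mul a).add
      ((hasDerivAt_logProfileDeriv 1 ht).const_mul b)).add
        ((hasDerivAt_logProfileDeriv γ ht).const_mul c))
    (eventually_mul_abs_le_of_isLittleO
      ((((isLittleO_logProfileDeriv 0 (γ - 2)).const_mul_left a).add
        ((isLittleO_logProfileDeriv 1 (γ - 2)).const_mul_left b)).add
          ((isLittleO_logProfileDeriv γ (γ - 2)).const_mul_left c)) hc ?_ ?_)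
  · filter_upwards [Ioo_mem_nhdsGT one_pos] with t ht using logWeight_nonneg _ ht
  · filter_upwards [Ioo_mem_nhdsGT one_pos] with t ht
    have h₀ := radialOp_logProfile 0 ht.1
    have h₁ := radialOp_logProfile 1 ht.1
    have h := radialOp_logProfile γ ht.1
    simp only [radialOp] at h₀ h₁ h ⊢
    rw [hf ht]
    exact le_of_eq (by linear_combination -(a * h₀) - b * h₁ - c * h)

theorem eventually_subHarm_logProfile_add (hΩo : IsOpen Ω) (hΩc : Ωᶜ.Nonempty)
    (hρ₀ : GoodCollar Ω ρ₀) (hc : c * (γ * (1 - γ)) < 0)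
    (hf : EqOn f (fun t => a * logProfile 0 t + b * logProfile 1 t + c * logProfile γ t)
      (Ioo 0 1)) :
    ∀ᶠ ρ in 𝓝[>] 0, SubHarm Ω (1 / 4) (collar Ω ρ) fun x => f (bdist Ω x) :=
  (eventually_superHarm_logProfile_add hΩo hΩc hρ₀ (f := fun t => -f t) (a := -a) (b := -b)
    (c := -c) (by linarith) fun t ht => by simp only [hf ht]; ring).mono
      fun _ => SubHarm.of_superHarm_neg

end Collar

theorem exists_collar_log_perturbed_harmonics {N : ℕ} {Ω : Set (EuclideanSpace ℝ (Fin N))}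
    {ρ₀ : ℝ} (hΩo : IsOpen Ω) (hΩc : Ωᶜ.Nonempty) (hρ₀ : GoodCollar Ω ρ₀) {ε : ℝ}
    (hε0 : 0 < ε) (hε1 : ε < 1) :
    ∃ ρ, 0 < ρ ∧ ρ < min 1 ρ₀ ∧
      (SuperHarm Ω (1 / 4) (collar Ω ρ)
          (fun x => bdist Ω x ^ (1 / 2 : ℝ) * (1 - log (1 / bdist Ω x) ^ (-ε))) ∧
        ∀ x ∈ collar Ω ρ, 0 < bdist Ω x ^ (1 / 2 : ℝ) * (1 - log (1 / bdist Ω x) ^ (-ε))) ∧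
      (SuperHarm Ω (1 / 4) (collar Ω ρ)
          (fun x => bdist Ω x ^ (1 / 2 : ℝ) * log (1 / bdist Ω x) *
            (1 + log (1 / bdist Ω x) ^ (-ε))) ∧
        ∀ x ∈ collar Ω ρ, 0 < bdist Ω x ^ (1 / 2 : ℝ) * log (1 / bdist Ω x) *
          (1 + log (1 / bdist Ω x) ^ (-ε))) ∧
      (SubHarm Ω (1 / 4) (collar Ω ρ)
          (fun x => bdist Ω x ^ (1 / 2 : ℝ) * (1 + log (1 / bdist Ω x) ^ (-ε))) ∧
        ∀ x ∈ collar Ω ρ, 0 < bdist Ω x ^ (1 / 2 : ℝ) * (1 + log (1 / bdist Ω x) ^ (-ε))) ∧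
      (SubHarm Ω (1 / 4) (collar Ω ρ)
          (fun x => bdist Ω x ^ (1 / 2 : ℝ) * log (1 / bdist Ω x) *
            (1 - log (1 / bdist Ω x) ^ (-ε))) ∧
        ∀ x ∈ collar Ω ρ, 0 < bdist Ω x ^ (1 / 2 : ℝ) * log (1 / bdist Ω x) *
          (1 - log (1 / bdist Ω x) ^ (-ε))) := by
  have hrpow : ∀ t ∈ Ioo (0 : ℝ) 1,
      log (1 / t) ^ (1 - ε) = log (1 / t) * log (1 / t) ^ (-ε) := fun t ht => by
    rw [sub_eq_add_neg, rpow_add (log_one_div_pos ht), rpow_one]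
  have hpos : ∀ᶠ ρ in 𝓝[>] 0, ∀ x ∈ collar Ω ρ, 0 < bdist Ω x ^ (1 / 2 : ℝ) ∧
      1 < log (1 / bdist Ω x) ∧ 0 < log (1 / bdist Ω x) ^ (-ε) ∧
      log (1 / bdist Ω x) ^ (-ε) < 1 := by
    filter_upwards [eventually_forall_collar hΩo hΩc eventually_one_lt_log_one_div]
      with ρ hL x hx
    exact ⟨rpow_pos_of_pos (bdist_mem_Ioo hΩo hΩc hx).1 _, hL x hx,
      rpow_pos_of_pos (one_pos.trans (hL x hx)) _,
      rpow_lt_one_of_one_lt_of_neg (hL x hx) (neg_lt_zero.2 hε0)⟩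
  refine exists_lt_of_eventually ?_ (lt_min one_pos hρ₀.1)
  filter_upwards [hpos,
    eventually_superHarm_logProfile_add hΩo hΩc hρ₀
      (f := fun t => t ^ (1 / 2 : ℝ) * (1 - log (1 / t) ^ (-ε)))
      (a := 1) (b := 0) (c := -1) (γ := -ε) (by nlinarith)
      fun t _ => by simp only [logProfile, rpow_zero]; ring,
    eventually_superHarm_logProfile_add hΩo hΩc hρ₀
      (f := fun t => t ^ (1 / 2 : ℝ) * log (1 / t) * (1 + log (1 / t) ^ (-ε)))
      (a := 0) (b := 1) (c := 1) (γ := 1 - ε) (by nlinarith)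
      fun t ht => by simp only [logProfile, rpow_one, hrpow t ht]; ring,
    eventually_subHarm_logProfile_add hΩo hΩc hρ₀
      (f := fun t => t ^ (1 / 2 : ℝ) * (1 + log (1 / t) ^ (-ε)))
      (a := 1) (b := 0) (c := 1) (γ := -ε) (by nlinarith)
      fun t _ => by simp only [logProfile, rpow_zero]; ring,
    eventually_subHarm_logProfile_add hΩo hΩc hρ₀
      (f := fun t => t ^ (1 / 2 : ℝ) * log (1 / t) * (1 - log (1 / t) ^ (-ε)))
      (a := 0) (b := 1) (c := -1) (γ := 1 - ε) (by nlinarith)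
      fun t ht => by simp only [logProfile, rpow_one, hrpow t ht]; ring]
    with ρ hpos h₁ h₂ h₃ h₄
  refine ⟨⟨h₁, fun x hx => ?_⟩, ⟨h₂, fun x hx => ?_⟩, ⟨h₃, fun x hx => ?_⟩,
    ⟨h₄, fun x hx => ?_⟩⟩ <;> obtain ⟨hδ, hL, hLε, hLε1⟩ := hpos x hx
  · exact mul_pos hδ (by linarith)
  · exact mul_pos (mul_pos hδ (by linarith)) (by linarith)
  · exact mul_pos hδ (by linarith)
  · exact mul_pos (mul_pos hδ (by linarith)) (by linarith)

theorem stmt6_general {N : ℕ} (hN : 2 ≤ N) (Ω : Set (EuclideanSpace ℝ (Fin N)))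
    (hΩo : IsOpen Ω) (hΩb : Bornology.IsBounded Ω)
    (ρ₀ : ℝ) (hρ₀ : GoodCollar Ω ρ₀) :
    ((∀ β : ℝ, 0 < β → β < 1 →
        ∃ ρ, 0 < ρ ∧ ρ < min 1 ρ₀ ∧
          SuperHarm Ω (1 / 4) (collar Ω ρ)
            (fun x => bdist Ω x ^ (1 / 2 : ℝ) * Real.log (1 / bdist Ω x) ^ β)) ∧
      (∀ β : ℝ, β < 0 ∨ 1 < β →
        ∃ ρ, 0 < ρ ∧ ρ < min 1 ρ₀ ∧
          SubHarm Ω (1 / 4) (collar Ω ρ)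
            (fun x => bdist Ω x ^ (1 / 2 : ℝ) * Real.log (1 / bdist Ω x) ^ β))) ∧
    (∀ ε : ℝ, 0 < ε → ε < 1 →
      ∃ ρ, 0 < ρ ∧ ρ < min 1 ρ₀ ∧
        (SuperHarm Ω (1 / 4) (collar Ω ρ)
            (fun x => bdist Ω x ^ (1 / 2 : ℝ) * (1 - Real.log (1 / bdist Ω x) ^ (-ε))) ∧
          ∀ x ∈ collar Ω ρ,
            0 < bdist Ω x ^ (1 / 2 : ℝ) * (1 - Real.log (1 / bdist Ω x) ^ (-ε))) ∧
        (SuperHarm Ω (1 / 4) (collar Ω ρ)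
            (fun x => bdist Ω x ^ (1 / 2 : ℝ) * Real.log (1 / bdist Ω x) *
              (1 + Real.log (1 / bdist Ω x) ^ (-ε))) ∧
          ∀ x ∈ collar Ω ρ,
            0 < bdist Ω x ^ (1 / 2 : ℝ) * Real.log (1 / bdist Ω x) *
              (1 + Real.log (1 / bdist Ω x) ^ (-ε))) ∧
        (SubHarm Ω (1 / 4) (collar Ω ρ)
            (fun x => bdist Ω x ^ (1 / 2 : ℝ) * (1 + Real.log (1 / bdist Ω x) ^ (-ε))) ∧
          ∀ x ∈ collar Ω ρ,
            0 < bdist Ω x ^ (1 / 2 : ℝ) * (1 + Real.log (1 / bdist Ω x) ^ (-ε))) ∧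
        (SubHarm Ω (1 / 4) (collar Ω ρ)
            (fun x => bdist Ω x ^ (1 / 2 : ℝ) * Real.log (1 / bdist Ω x) *
              (1 - Real.log (1 / bdist Ω x) ^ (-ε))) ∧
          ∀ x ∈ collar Ω ρ,
            0 < bdist Ω x ^ (1 / 2 : ℝ) * Real.log (1 / bdist Ω x) *
              (1 - Real.log (1 / bdist Ω x) ^ (-ε)))) := by
  have hΩc := compl_nonempty_of_isBounded (by omega) hΩb
  have hmin : 0 < min 1 ρ₀ := lt_min one_pos hρ₀.1
  refine ⟨⟨fun β hβ0 hβ1 => exists_lt_of_eventually ?_ hmin,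
    fun β hβ => exists_lt_of_eventually ?_ hmin⟩,
    fun ε hε0 hε1 => exists_collar_log_perturbed_harmonics hΩo hΩc hρ₀ hε0 hε1⟩
  · exact eventually_superHarm_logProfile_add hΩo hΩc hρ₀ (f := logProfile β)
      (a := 0) (b := 0) (c := 1) (γ := β) (by nlinarith) fun t _ => by simp only; ring
  · exact eventually_subHarm_logProfile_add hΩo hΩc hρ₀ (f := logProfile β)
      (a := 0) (b := 0) (c := 1) (γ := β) (by rcases hβ with h | h <;> nlinarith)
      fun t _ => by simp only; ring

/-- The case `μ = 1/4`.
(a) For `β ∈ (0,1)` the function `δ^{1/2}(log(1/δ))^β` is a super-harmonic of `L_{1/4}`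
on some `Ω_ρ` with `ρ ∈ (0, min{1, ρ₀})`; for `β < 0` or `β > 1` it is a sub-harmonic on
some such collar.
(b) For every `ε ∈ (0,1)` there is `ρ ∈ (0, min{1, ρ₀})` such that on `Ω_ρ` the functions
`δ^{1/2}(1-(log(1/δ))^{-ε})` and `δ^{1/2}·log(1/δ)·(1+(log(1/δ))^{-ε})` are positive
super-harmonics of `L_{1/4}`, while `δ^{1/2}(1+(log(1/δ))^{-ε})` and
`δ^{1/2}·log(1/δ)·(1-(log(1/δ))^{-ε})` are positive sub-harmonics of `L_{1/4}`. -/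
theorem stmt6 {N : ℕ} (hN : 2 ≤ N) (Ω : Set (EuclideanSpace ℝ (Fin N)))
    (hΩo : IsOpen Ω) (hΩne : Ω.Nonempty) (hΩb : Bornology.IsBounded Ω)
    (ρ₀ : ℝ) (hρ₀ : GoodCollar Ω ρ₀) :
    ((∀ β : ℝ, 0 < β → β < 1 →
        ∃ ρ, 0 < ρ ∧ ρ < min 1 ρ₀ ∧
          SuperHarm Ω (1 / 4) (collar Ω ρ)
            (fun x => bdist Ω x ^ (1 / 2 : ℝ) * Real.log (1 / bdist Ω x) ^ β)) ∧
      (∀ β : ℝ, β < 0 ∨ 1 < β →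
        ∃ ρ, 0 < ρ ∧ ρ < min 1 ρ₀ ∧
          SubHarm Ω (1 / 4) (collar Ω ρ)
            (fun x => bdist Ω x ^ (1 / 2 : ℝ) * Real.log (1 / bdist Ω x) ^ β))) ∧
    (∀ ε : ℝ, 0 < ε → ε < 1 →
      ∃ ρ, 0 < ρ ∧ ρ < min 1 ρ₀ ∧
        (SuperHarm Ω (1 / 4) (collar Ω ρ)
            (fun x => bdist Ω x ^ (1 / 2 : ℝ) * (1 - Real.log (1 / bdist Ω x) ^ (-ε))) ∧
          ∀ x ∈ collar Ω ρ,
            0 < bdist Ω x ^ (1 / 2 : ℝ) * (1 - Real.log (1 / bdist Ω x) ^ (-ε))) ∧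
        (SuperHarm Ω (1 / 4) (collar Ω ρ)
            (fun x => bdist Ω x ^ (1 / 2 : ℝ) * Real.log (1 / bdist Ω x) *
              (1 + Real.log (1 / bdist Ω x) ^ (-ε))) ∧
          ∀ x ∈ collar Ω ρ,
            0 < bdist Ω x ^ (1 / 2 : ℝ) * Real.log (1 / bdist Ω x) *
              (1 + Real.log (1 / bdist Ω x) ^ (-ε))) ∧
        (SubHarm Ω (1 / 4) (collar Ω ρ)
            (fun x => bdist Ω x ^ (1 / 2 : ℝ) * (1 + Real.log (1 / bdist Ω x) ^ (-ε))) ∧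
          ∀ x ∈ collar Ω ρ,
            0 < bdist Ω x ^ (1 / 2 : ℝ) * (1 + Real.log (1 / bdist Ω x) ^ (-ε))) ∧
        (SubHarm Ω (1 / 4) (collar Ω ρ)
            (fun x => bdist Ω x ^ (1 / 2 : ℝ) * Real.log (1 / bdist Ω x) *
              (1 - Real.log (1 / bdist Ω x) ^ (-ε))) ∧
          ∀ x ∈ collar Ω ρ,
            0 < bdist Ω x ^ (1 / 2 : ℝ) * Real.log (1 / bdist Ω x) *
              (1 - Real.log (1 / bdist Ω x) ^ (-ε)))) :=
  stmt6_general hN Ω hΩo hΩb ρ₀ hρ₀
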